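/- (Passivity is inherited by the port behaviour) Let S, P be disjoint finite sets with pairwise disjoint copies S′, S″, P′, P″, and work over ℝ. Let V₀ ⊆ ℝ_{S′∪P′} be a subspace and for a subspace W ⊆ ℝ_{S′∪S″} define the port behaviour B(W) := ((V₀ ⊕ (V₀^⊥)_{S″P″}) ↔ W)_{P′(−P″)} ⊆ ℝ_{P′∪P″}. Then: (1) if W is passive (with respect to the copies S′, S″), so is B(W) (with respect to the copies P′, P″); (2) if W is strictly passive and moreover V₀×P′ = {0} and V₀^⊥×P′ = {0}, then B(W) is strictly passive. -/
import Mathlib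


noncomputable section

open scoped BigOperators

/-- Dot product of two vectors indexed by a finite type. -/
def dotProd {X : Type*} [Fintype X] (f g : X → ℝ) : ℝ :=
  ∑ x, f x * g x

/-- Orthogonal complement of a collection of vectors on a union of two disjoint
finite index sets (encoded as pairs). -/
def perp2 {A B : Type*} [Fintype A] [Fintype B]
    (K : Set ((A → ℝ) × (B → ℝ))) : Set ((A → ℝ) × (B → ℝ)) :=
  {y | ∀ x ∈ K, dotProd x.1 y.1 + dotProd x.2 y.2 = 0}

/-- The port behaviour `B(W) := ((V₀ ⊕ (V₀^⊥)_{S″P″}) ↔ W)_{P′(−P″)}`. -/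
def portB {S P : Type*} [Fintype S] [Fintype P]
    (V₀ : Submodule ℝ ((S → ℝ) × (P → ℝ))) (W : Set ((S → ℝ) × (S → ℝ))) :
    Set ((P → ℝ) × (P → ℝ)) :=
  {z | ∃ f₁ f₂ : S → ℝ, (f₁, z.1) ∈ V₀ ∧
    (f₂, -z.2) ∈ perp2 (V₀ : Set ((S → ℝ) × (P → ℝ))) ∧ (f₁, f₂) ∈ W}

/-- Passivity is inherited by the port behaviour; strict passivity is inherited
when the contractions of `V₀` and of `V₀^⊥` to the port set `P′` are zero. -/
theorem stmt18 (S P : Type*) [Fintype S] [Fintype P]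
    (V₀ : Submodule ℝ ((S → ℝ) × (P → ℝ)))
    (W : Submodule ℝ ((S → ℝ) × (S → ℝ))) :
    ((∀ z ∈ W, 0 ≤ dotProd z.1 z.2) →
      ∀ z ∈ portB V₀ (W : Set ((S → ℝ) × (S → ℝ))), 0 ≤ dotProd z.1 z.2)
    ∧ (((∀ z ∈ W, 0 ≤ dotProd z.1 z.2) ∧
          ∀ z ∈ W, z ≠ 0 → 0 < dotProd z.1 z.2) →
        {g : P → ℝ | ((0 : S → ℝ), g) ∈ V₀} = {0} →
        {g : P → ℝ | ((0 : S → ℝ), g) ∈ perp2 (V₀ : Set ((S → ℝ) × (P → ℝ)))} = {0} →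
        (∀ z ∈ portB V₀ (W : Set ((S → ℝ) × (S → ℝ))), 0 ≤ dotProd z.1 z.2) ∧
          ∀ z ∈ portB V₀ (W : Set ((S → ℝ) × (S → ℝ))), z ≠ 0 → 0 < dotProd z.1 z.2) := by

  have key : ∀ z ∈ portB V₀ (W : Set ((S → ℝ) × (S → ℝ))),
      ∃ f₁ f₂ : S → ℝ, (f₁, z.1) ∈ V₀ ∧
        (f₂, -z.2) ∈ perp2 (V₀ : Set ((S → ℝ) × (P → ℝ))) ∧ (f₁, f₂) ∈ W ∧
        dotProd z.1 z.2 = dotProd f₁ f₂ := by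
    rintro z ⟨f₁, f₂, h1, h2, h3⟩
    refine ⟨f₁, f₂, h1, h2, h3, ?_⟩
    have := h2 (f₁, z.1) h1
    simp only [dotProd, Pi.neg_apply, mul_neg, Finset.sum_neg_distrib] at this ⊢
    linarith
  constructor
  · intro hW z hz
    obtain ⟨f₁, f₂, _, _, h3, heq⟩ := key z hz
    rw [heq]; exact hW (f₁, f₂) h3
  · rintro ⟨hW, hWs⟩ hV hVp
    have pass : ∀ z ∈ portB V₀ (W : Set ((S → ℝ) × (S → ℝ))), 0 ≤ dotProd z.1 z.2 := by
      intro z hz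
      obtain ⟨f₁, f₂, _, _, h3, heq⟩ := key z hz
      rw [heq]; exact hW (f₁, f₂) h3
    refine ⟨pass, ?_⟩
    intro z hz hne
    obtain ⟨f₁, f₂, h1, h2, h3, heq⟩ := key z hz
    rcases eq_or_ne (f₁, f₂) (0 : (S → ℝ) × (S → ℝ)) with hf0 | hf0
    · exfalso
      have hf1 : f₁ = 0 := congrArg Prod.fst hf0
      have hf2 : f₂ = 0 := congrArg Prod.snd hf0
      have hz1 : z.1 = 0 := by
        have : z.1 ∈ {g : P → ℝ | ((0 : S → ℝ), g) ∈ V₀} := by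
          simpa [hf1] using h1
        simpa [hV] using this
      have hz2 : z.2 = 0 := by
        have : -z.2 ∈ {g : P → ℝ | ((0 : S → ℝ), g) ∈ perp2
            (V₀ : Set ((S → ℝ) × (P → ℝ)))} := by simpa [hf2] using h2
        have h := this
        rw [hVp] at h
        simpa [neg_eq_zero] using h
      exact hne (Prod.ext hz1 hz2)
    · rw [heq]; exact hWs (f₁, f₂) h3 hf0
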